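/- arXiv:math/0110247 — 5 statements merged into one kernel-verified Lean document; each statement's English description precedes it below -/
import Mathlib

section
/- Let F : E → C be a category fibered in groupoids over a small category C, let X be an object of C, and let E_X be the fiber groupoid over X. Then: (1) for every object X' of E with F(X') = X there exists a functor G : C/X → E over C (i.e. with F ∘ G equal to the forgetful functor C/X → C) such that G(id_X) = X'; (2) if G, G' : C/X → E are two such functors over C and f : G(id_X) → G'(id_X) is a morphism of E lying over id_X, then there is a unique natural isomorphism φ : G → G' whose components lie over identity morphisms of C and with φ(id_X) = f. Consequently, evaluation at id_X gives an equivalence of groupoids Grpd(C/X, E) → E_X that is surjective on objects. -/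
open CategoryTheory

universe u v

/-- A functor `F : E ⥤ C` is a category fibered in groupoids if morphisms of `C`
lift (condition (1)) and lifts of commutative triangles exist uniquely (condition (2)). -/
structure IsFiberedInGroupoids {E : Type*} {C : Type*} [Category E] [Category C]
    (F : E ⥤ C) : Prop where
  lift : ∀ ⦃X Y : C⦄ (f : Y ⟶ X) (X' : E) (hX : F.obj X' = X),
    ∃ (Y' : E) (f' : Y' ⟶ X') (hY : F.obj Y' = Y),
      F.map f' = eqToHom hY ≫ f ≫ eqToHom hX.symm
  uniqueLift : ∀ ⦃Y' Z' X' : E⦄ (f' : Y' ⟶ X') (g' : Z' ⟶ X')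
    (h : F.obj Y' ⟶ F.obj Z'), h ≫ F.map g' = F.map f' →
      ∃! h' : Y' ⟶ Z', h' ≫ g' = f' ∧ F.map h' = h


section FiberSections

variable {E : Type*} {C : Type*} [Category E] [Category C] (F : E ⥤ C)

/-- An object of the fiber of `F : E ⥤ C` over `X : C`. -/
structure FiberObj (X : C) where
  obj : E
  isOver : F.obj obj = X

/-- A morphism in the fiber of `F : E ⥤ C` over `X : C`: a morphism of `E`
lying over the identity of `X`. -/
@[ext]
structure FiberHom {X : C} (a b : FiberObj F X) where
  hom : a.obj ⟶ b.obj
  isOver : F.map hom = eqToHom (a.isOver.trans b.isOver.symm)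

/-- The fiber category of `F : E ⥤ C` over `X`. -/
instance fiberCategory (X : C) : Category (FiberObj F X) where
  Hom a b := FiberHom F a b
  id a := ⟨𝟙 a.obj, by simp⟩
  comp f g := ⟨f.hom ≫ g.hom, by rw [Functor.map_comp, f.isOver, g.isOver, eqToHom_trans]⟩
  id_comp f := by apply FiberHom.ext; simp
  comp_id f := by apply FiberHom.ext; simp
  assoc f g h := by apply FiberHom.ext; simp

@[simp] lemma fiber_comp_hom {X : C} {a b c : FiberObj F X} (f : a ⟶ b) (g : b ⟶ c) :
    (f ≫ g).hom = f.hom ≫ g.hom := rfl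

@[simp] lemma fiber_id_hom {X : C} (a : FiberObj F X) : (𝟙 a : FiberHom F a a).hom = 𝟙 a.obj := rfl

/-- A section of `F : E ⥤ C` over `X : C`: a functor `C/X ⥤ E` over `C`. -/
structure SectionsObj (X : C) where
  func : Over X ⥤ E
  isOver : func ⋙ F = Over.forget X

lemma SectionsObj.obj_over {X : C} (s : SectionsObj F X) (ι : Over X) :
    F.obj (s.func.obj ι) = ι.left :=
  congrArg (fun Φ : Over X ⥤ C => Φ.obj ι) s.isOver

/-- A morphism of sections: a natural isomorphism whose components lie over
identity morphisms of `C`. -/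
@[ext]
structure SectionsHom {X : C} (s t : SectionsObj F X) where
  nat : s.func ⟶ t.func
  iso : IsIso nat
  isOver : ∀ ι : Over X, F.map (nat.app ι) =
    eqToHom ((s.obj_over F ι).trans (t.obj_over F ι).symm)

/-- The category of sections of `F : E ⥤ C` over `X`. -/
instance sectionsCategory (X : C) : Category (SectionsObj F X) where
  Hom s t := SectionsHom F s t
  id s := ⟨𝟙 s.func, inferInstance, fun ι => by simp⟩
  comp φ ψ := ⟨φ.nat ≫ ψ.nat, by have := φ.iso; have := ψ.iso; infer_instance,
    fun ι => by rw [NatTrans.comp_app, Functor.map_comp, φ.isOver, ψ.isOver, eqToHom_trans]⟩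
  id_comp φ := by apply SectionsHom.ext; simp
  comp_id φ := by apply SectionsHom.ext; simp
  assoc φ ψ χ := by apply SectionsHom.ext; simp

@[simp] lemma sections_comp_nat {X : C} {s t u : SectionsObj F X} (φ : s ⟶ t) (ψ : t ⟶ u) :
    (φ ≫ ψ).nat = φ.nat ≫ ψ.nat := rfl

@[simp] lemma sections_id_nat {X : C} (s : SectionsObj F X) :
    (𝟙 s : SectionsHom F s s).nat = 𝟙 s.func := rfl

/-- The sections form a groupoid. -/
noncomputable instance sectionsGroupoid (X : C) : Groupoid (SectionsObj F X) where
  inv {s t} φ :=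
    letI := φ.iso
    ⟨inv φ.nat, inferInstance, fun ι => by
      have happ : (inv φ.nat).app ι = inv (φ.nat.app ι) := by
        apply IsIso.eq_inv_of_hom_inv_id
        rw [← NatTrans.comp_app, IsIso.hom_inv_id, NatTrans.id_app]
      rw [happ, Functor.map_inv]
      have hov := φ.isOver ι
      apply IsIso.inv_eq_of_hom_inv_id
      rw [hov, eqToHom_trans, eqToHom_refl]⟩
  inv_comp {s t} φ := by
    apply SectionsHom.ext
    letI := φ.iso
    simp
  comp_inv {s t} φ := by
    apply SectionsHom.ext
    letI := φ.iso
    simp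

/-- Evaluation of sections at `id_X`. -/
def evalAtId (X : C) : SectionsObj F X ⥤ FiberObj F X where
  obj s := ⟨s.func.obj (Over.mk (𝟙 X)), s.obj_over F (Over.mk (𝟙 X))⟩
  map {s t} φ := ⟨φ.nat.app (Over.mk (𝟙 X)), φ.isOver (Over.mk (𝟙 X))⟩
  map_id s := by apply FiberHom.ext; simp
  map_comp φ ψ := by apply FiberHom.ext; simp

end FiberSections

/-!
A section over `X` is determined by its value at the terminal object `id_X` of `C/X`. Given `X'`
over `X`, lift every structure morphism `ι.hom : ι.left ⟶ X` to a morphism with target `X'`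
(taking `𝟙 X'` at `id_X`); the unique lifting of commuting triangles makes these lifts a functor.
Likewise a fiber morphism `f` between the values of two sections `s`, `t` at `id_X` extends: the
component at `ι` is the unique morphism over the identity lifting `s(ι ⟶ id_X) ≫ f` through
`t(ι ⟶ id_X)`, and the same uniqueness gives naturality, uniqueness of the extension, and (since
morphisms over identities are invertible in a category fibered in groupoids) invertibility.
-/

namespace IsFiberedInGroupoids

variable {E : Type*} {C : Type*} [Category E] [Category C] {F : E ⥤ C}

lemma hom_ext (hF : IsFiberedInGroupoids F) {Y' Z' X' : E} {h₁ h₂ : Y' ⟶ Z'} (g : Z' ⟶ X')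
    (hg : h₁ ≫ g = h₂ ≫ g) (hmap : F.map h₁ = F.map h₂) : h₁ = h₂ := by
  obtain ⟨_, -, hunique⟩ := hF.uniqueLift (h₂ ≫ g) g (F.map h₂) (F.map_comp _ _).symm
  exact (hunique h₁ ⟨hg, hmap⟩).trans (hunique h₂ ⟨rfl, rfl⟩).symm

lemma isIso_of_map_eq_eqToHom (hF : IsFiberedInGroupoids F) {A B : E} (u : A ⟶ B)
    (h : F.obj A = F.obj B) (hu : F.map u = eqToHom h) : IsIso u := by
  obtain ⟨v, ⟨hvu, hv⟩, -⟩ := hF.uniqueLift (𝟙 B) u (eqToHom h.symm) (by simp [hu])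
  exact ⟨v, hF.hom_ext u (by simp [hvu]) (by simp [hu, hv]), hvu⟩

end IsFiberedInGroupoids

variable {E : Type*} {C : Type*} [Category E] [Category C] {F : E ⥤ C}

lemma SectionsObj.map_over {X : C} (s : SectionsObj F X) {ι κ : Over X} (u : ι ⟶ κ) :
    F.map (s.func.map u) =
      eqToHom (s.obj_over F ι) ≫ u.left ≫ eqToHom (s.obj_over F κ).symm := by
  simpa using Functor.congr_hom s.isOver u

section ExistsSection

variable {X : C} {X' : E}

/-- A family of these, one for each `ι : Over X`, determines a section through `X'`. -/
structure OverLift (hX : F.obj X' = X) (ι : Over X) where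
  obj : E
  hom : obj ⟶ X'
  obj_over : F.obj obj = ι.left
  map_hom : F.map hom = eqToHom obj_over ≫ ι.hom ≫ eqToHom hX.symm

def OverLift.id (hX : F.obj X' = X) : OverLift hX (Over.mk (𝟙 X)) :=
  ⟨X', 𝟙 X', hX, by simp⟩

noncomputable def OverLift.ofFibered (hF : IsFiberedInGroupoids F) (hX : F.obj X' = X)
    (ι : Over X) : OverLift hX ι :=
  ⟨_, _, _, (hF.lift ι.hom X' hX).choose_spec.choose_spec.choose_spec⟩

lemma OverLift.exists_hom {hX : F.obj X' = X} (hF : IsFiberedInGroupoids F)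
    (L : ∀ ι : Over X, OverLift hX ι) {ι κ : Over X} (u : ι ⟶ κ) :
    ∃ m : (L ι).obj ⟶ (L κ).obj, m ≫ (L κ).hom = (L ι).hom ∧
      F.map m = eqToHom (L ι).obj_over ≫ u.left ≫ eqToHom (L κ).obj_over.symm :=
  (hF.uniqueLift (L ι).hom (L κ).hom _ (by simp [(L ι).map_hom, (L κ).map_hom])).exists

/-- Functoriality comes from the uniqueness of the lifts of commuting triangles over `X'`. -/
noncomputable def functorOfLifts {hX : F.obj X' = X} (hF : IsFiberedInGroupoids F)
    (L : ∀ ι : Over X, OverLift hX ι) : Over X ⥤ E where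
  obj ι := (L ι).obj
  map u := (OverLift.exists_hom hF L u).choose
  map_id ι := by
    obtain ⟨hcomm, hover⟩ := (OverLift.exists_hom hF L (𝟙 ι)).choose_spec
    exact hF.hom_ext (L ι).hom (by simpa using hcomm) (by simpa using hover)
  map_comp {ι κ ρ} u v := by
    obtain ⟨hcomm, hover⟩ := (OverLift.exists_hom hF L (u ≫ v)).choose_spec
    obtain ⟨hcomm₁, hover₁⟩ := (OverLift.exists_hom hF L u).choose_spec
    obtain ⟨hcomm₂, hover₂⟩ := (OverLift.exists_hom hF L v).choose_spec
    refine hF.hom_ext (L ρ).hom ?_ ?_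
    · rw [hcomm, Category.assoc, hcomm₂, hcomm₁]
    · rw [hover, F.map_comp, hover₁, hover₂]
      simp

lemma functorOfLifts_comp {hX : F.obj X' = X} (hF : IsFiberedInGroupoids F)
    (L : ∀ ι : Over X, OverLift hX ι) : functorOfLifts hF L ⋙ F = Over.forget X :=
  CategoryTheory.Functor.ext (fun ι => (L ι).obj_over)
    (fun _ _ u => (OverLift.exists_hom hF L u).choose_spec.2)

lemma exists_sectionsObj_obj_terminal (hF : IsFiberedInGroupoids F) (hX : F.obj X' = X) :
    ∃ s : SectionsObj F X, s.func.obj (Over.mk (𝟙 X)) = X' := by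
  classical
  let L := Function.update (OverLift.ofFibered hF hX) (Over.mk (𝟙 X)) (OverLift.id hX)
  exact ⟨⟨functorOfLifts hF L, functorOfLifts_comp hF L⟩,
    congrArg OverLift.obj (Function.update_self _ _ _)⟩

end ExistsSection

section ExtendFiberHom

variable {X : C} {s t : SectionsObj F X}

lemma SectionsHom.ext_of_app_terminal (hF : IsFiberedInGroupoids F) {φ ψ : s ⟶ t}
    (h : φ.nat.app (Over.mk (𝟙 X)) = ψ.nat.app (Over.mk (𝟙 X))) : φ = ψ := by
  refine SectionsHom.ext (NatTrans.ext (funext fun ι => ?_))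
  refine hF.hom_ext (t.func.map (Over.mkIdTerminal.from ι)) ?_
    ((φ.isOver ι).trans (ψ.isOver ι).symm)
  rw [← φ.nat.naturality, ← ψ.nat.naturality, h]

variable {f : s.func.obj (Over.mk (𝟙 X)) ⟶ t.func.obj (Over.mk (𝟙 X))}

lemma exists_app_of_fiberHom (hF : IsFiberedInGroupoids F)
    (hf : F.map f = eqToHom ((s.obj_over F (Over.mk (𝟙 X))).trans
      (t.obj_over F (Over.mk (𝟙 X))).symm)) (ι : Over X) :
    ∃ m : s.func.obj ι ⟶ t.func.obj ι,
      m ≫ t.func.map (Over.mkIdTerminal.from ι) =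
        s.func.map (Over.mkIdTerminal.from ι) ≫ f ∧
      F.map m = eqToHom ((s.obj_over F ι).trans (t.obj_over F ι).symm) :=
  (hF.uniqueLift _ _ _ (by simp [s.map_over, t.map_over, hf])).exists

variable (hF : IsFiberedInGroupoids F)
  (hf : F.map f = eqToHom ((s.obj_over F (Over.mk (𝟙 X))).trans
    (t.obj_over F (Over.mk (𝟙 X))).symm))

noncomputable def SectionsHom.extend : s ⟶ t where
  nat :=
    { app := fun ι => (exists_app_of_fiberHom hF hf ι).choose
      naturality := fun ι κ u => by
        obtain ⟨hcommι, hoverι⟩ := (exists_app_of_fiberHom hF hf ι).choose_spec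
        obtain ⟨hcommκ, hoverκ⟩ := (exists_app_of_fiberHom hF hf κ).choose_spec
        refine hF.hom_ext (t.func.map (Over.mkIdTerminal.from κ)) ?_ ?_
        · simp only [Category.assoc, hcommκ, ← Functor.map_comp, Limits.IsTerminal.comp_from]
          simp only [← Category.assoc, ← Functor.map_comp, Limits.IsTerminal.comp_from, hcommι]
        · simp [s.map_over, t.map_over, hoverι, hoverκ] }
  iso :=
    have := fun ι => hF.isIso_of_map_eq_eqToHom _ _ (exists_app_of_fiberHom hF hf ι).choose_spec.2
    NatIso.isIso_of_isIso_app _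
  isOver := fun ι => (exists_app_of_fiberHom hF hf ι).choose_spec.2

lemma SectionsHom.extend_app_terminal :
    (SectionsHom.extend hF hf).nat.app (Over.mk (𝟙 X)) = f := by
  simpa [SectionsHom.extend] using (exists_app_of_fiberHom hF hf (Over.mk (𝟙 X))).choose_spec.1

end ExtendFiberHom

lemma evalAtId_faithful (hF : IsFiberedInGroupoids F) (X : C) : (evalAtId F X).Faithful :=
  ⟨fun h => SectionsHom.ext_of_app_terminal hF (congrArg FiberHom.hom h)⟩

lemma evalAtId_full (hF : IsFiberedInGroupoids F) (X : C) : (evalAtId F X).Full :=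
  ⟨fun g => ⟨SectionsHom.extend hF g.isOver,
    FiberHom.ext (SectionsHom.extend_app_terminal hF g.isOver)⟩⟩

lemma evalAtId_obj_surjective (hF : IsFiberedInGroupoids F) (X : C) :
    Function.Surjective (evalAtId F X).obj := by
  rintro ⟨X', hX⟩
  obtain ⟨s, hs⟩ := exists_sectionsObj_obj_terminal hF hX
  refine ⟨s, ?_⟩
  subst hs
  rfl

lemma evalAtId_isEquivalence (hF : IsFiberedInGroupoids F) (X : C) :
    (evalAtId F X).IsEquivalence where
  faithful := evalAtId_faithful hF X
  full := evalAtId_full hF X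
  essSurj := (evalAtId F X).essSurj_of_surj (evalAtId_obj_surjective hF X)

/-- For a category fibered in groupoids `F : E ⥤ C` and `X : C`:
(1) every object of the fiber over `X` extends to a section `C/X ⥤ E` over `C`;
(2) a morphism between the values at `id_X` of two sections extends uniquely to a
natural isomorphism over identities between the sections;
consequently evaluation at `id_X` is an equivalence of groupoids
`Grpd(C/X, E) ⥤ E_X` which is surjective on objects. -/
theorem sections_equiv_fiber {E : Type u} {C : Type u} [Category.{u} E] [Category.{u} C]
    (F : E ⥤ C) (hF : IsFiberedInGroupoids F) (X : C) :
    (∀ (X' : E) (_ : F.obj X' = X),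
      ∃ s : SectionsObj F X, s.func.obj (Over.mk (𝟙 X)) = X') ∧
    (∀ (s t : SectionsObj F X)
      (f : s.func.obj (Over.mk (𝟙 X)) ⟶ t.func.obj (Over.mk (𝟙 X))),
      F.map f = eqToHom ((s.obj_over F (Over.mk (𝟙 X))).trans
        (t.obj_over F (Over.mk (𝟙 X))).symm) →
      ∃! φ : s ⟶ t, φ.nat.app (Over.mk (𝟙 X)) = f) ∧
    (Functor.IsEquivalence (evalAtId F X) ∧ Function.Surjective (evalAtId F X).obj) := by
  refine ⟨fun _ hX => exists_sectionsObj_obj_terminal hF hX, fun s t f hf => ?_,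
    evalAtId_isEquivalence hF X, evalAtId_obj_surjective hF X⟩
  exact ⟨SectionsHom.extend hF hf, SectionsHom.extend_app_terminal hF hf,
    fun ψ hψ => SectionsHom.ext_of_app_terminal hF
      (hψ.trans (SectionsHom.extend_app_terminal hF hf).symm)⟩
end

section
/- A functor F : E → C between small categories is a category fibered in groupoids if and only if for every object X' of E the induced functor on slice categories E/X' → C/F(X') is an equivalence of categories that is surjective on objects. -/
open CategoryTheory

universe u v

/-!
Condition (1) at `X'` says exactly that every object of `C/F(X')` is the image of an object
of `E/X'`, and condition (2) at `X'` says exactly that `E/X' ⥤ C/F(X')` is bijective on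
morphisms. A full, faithful functor that is surjective on objects is an equivalence.
-/

namespace CategoryTheory

lemma Functor.isEquivalence_and_surjective_obj_iff {C D : Type*} [Category C] [Category D]
    (G : C ⥤ D) :
    G.IsEquivalence ∧ Function.Surjective G.obj ↔
      Nonempty G.FullyFaithful ∧ Function.Surjective G.obj := by
  refine and_congr_left fun hsurj => ⟨fun _ => ⟨.ofFullyFaithful G⟩, fun ⟨hG⟩ => ?_⟩
  have := hG.full
  have := hG.faithful
  have := essSurj_of_surj hsurj
  exact { }

lemma Over.mk_eq_mk_iff {C : Type*} [Category C] {S Y Y' : C} (f : Y ⟶ S) (f' : Y' ⟶ S) :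
    Over.mk f = Over.mk f' ↔ ∃ hY : Y = Y', f = eqToHom hY ≫ f' := by
  constructor
  · intro h
    refine ⟨congr_arg Comma.left h, ?_⟩
    simpa using (Over.w (eqToHom h)).symm
  · rintro ⟨rfl, rfl⟩
    simp

variable {E C : Type*} [Category E] [Category C] (F : E ⥤ C)

lemma Over.post_obj_surjective_iff (X' : E) :
    Function.Surjective (Over.post F (X := X')).obj ↔
      ∀ ⦃Y : C⦄ (f : Y ⟶ F.obj X'), ∃ (Y' : E) (f' : Y' ⟶ X') (hY : F.obj Y' = Y),
        F.map f' = eqToHom hY ≫ f := by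
  refine (Over.forall_iff _).trans (forall₂_congr fun Y f => ?_)
  simp only [← Over.mk_eq_mk_iff]
  constructor
  · rintro ⟨A, hA⟩
    exact ⟨A.left, A.hom, hA⟩
  · rintro ⟨Y', f', hf'⟩
    exact ⟨Over.mk f', hf'⟩

lemma Over.post_map_bijective_iff {Y' Z' X' : E} (f' : Y' ⟶ X') (g' : Z' ⟶ X') :
    Function.Bijective ((Over.post F).map : (Over.mk f' ⟶ Over.mk g') → _) ↔
      ∀ h : F.obj Y' ⟶ F.obj Z', h ≫ F.map g' = F.map f' →
        ∃! h' : Y' ⟶ Z', h' ≫ g' = f' ∧ F.map h' = h := by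
  rw [Function.bijective_iff_existsUnique]
  constructor
  · intro H h w
    obtain ⟨a, ha, huniq⟩ := H (Over.homMk h w)
    refine ⟨a.left, ⟨Over.w a, congr_arg CommaMorphism.left ha⟩, fun k ⟨hk, hFk⟩ => ?_⟩
    exact congr_arg CommaMorphism.left (huniq (Over.homMk k hk) (by ext; exact hFk))
  · intro H b
    obtain ⟨h', ⟨hh', hFh'⟩, huniq⟩ := H b.left (Over.w b)
    refine ⟨Over.homMk h' hh', by ext; exact hFh', fun a ha => ?_⟩
    exact Over.OverMorphism.ext (huniq a.left ⟨Over.w a, congr_arg CommaMorphism.left ha⟩)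

lemma Over.post_fullyFaithful_iff (X' : E) :
    Nonempty (Over.post F (X := X')).FullyFaithful ↔
      ∀ ⦃Y' Z' : E⦄ (f' : Y' ⟶ X') (g' : Z' ⟶ X') (h : F.obj Y' ⟶ F.obj Z'),
        h ≫ F.map g' = F.map f' → ∃! h' : Y' ⟶ Z', h' ≫ g' = f' ∧ F.map h' = h := by
  simp only [Functor.FullyFaithful.nonempty_iff_map_bijective, Over.forall_iff,
    Over.post_map_bijective_iff]
  exact ⟨fun H _ _ f' g' => H _ f' _ g', fun H _ f' _ g' => H f' g'⟩

end CategoryTheory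

theorem isFiberedInGroupoids_iff_forall_post {E C : Type*} [Category E] [Category C]
    (F : E ⥤ C) :
    IsFiberedInGroupoids F ↔ ∀ X' : E,
      Nonempty (Over.post F (X := X')).FullyFaithful ∧
        Function.Surjective (Over.post F (X := X')).obj := by
  simp only [forall_and, Over.post_fullyFaithful_iff, Over.post_obj_surjective_iff]
  constructor
  · rintro ⟨lift, uniqueLift⟩
    exact ⟨fun X' Y' Z' => @uniqueLift Y' Z' X', fun X' Y f => by simpa using lift f X' rfl⟩
  · rintro ⟨uniqueLift, lift⟩
    refine ⟨fun X Y f X' hX => ?_, fun Y' Z' X' => @uniqueLift X' Y' Z'⟩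
    subst hX
    simpa using lift X' f

/-- A functor between small categories is a category fibered in groupoids if and only
if all the induced functors on slice categories `E/X' ⥤ C/F(X')` are equivalences of
categories which are surjective on objects. -/
theorem isFiberedInGroupoids_iff_slice_equivalences
    {E C : Type u} [Category.{u} E] [Category.{u} C] (F : E ⥤ C) :
    IsFiberedInGroupoids F ↔
      ∀ X' : E, Functor.IsEquivalence (Over.post F (X := X')) ∧
        Function.Surjective (Over.post F (X := X')).obj := by
  simp only [isFiberedInGroupoids_iff_forall_post, Functor.isEquivalence_and_surjective_obj_iff]
end

section
/- Let C be a small category with pullbacks equipped with a Grothendieck pretopology and let φ : F → G be a map of presheaves of groupoids on C. Then φ induces an isomorphism on sheaves of homotopy groups if and only if φ satisfies the local lifting conditions (L1), (L2), (L3). -/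
set_option linter.unusedSectionVars false

open CategoryTheory Opposite Limits

universe u

variable {C : Type u} [Category.{u} C] [HasPullbacks C]

section Pi0Aut

variable {F G : Cᵒᵖ ⥤ Grpd.{u, u}}

lemma grpd_map_obj_id (F : Cᵒᵖ ⥤ Grpd.{u, u}) (X : Cᵒᵖ) (a : F.obj X) :
    (F.map (𝟙 X)).obj a = a := by rw [F.map_id]; rfl

lemma grpd_map_obj_comp (F : Cᵒᵖ ⥤ Grpd.{u, u}) {X Y Z : Cᵒᵖ} (g : X ⟶ Y) (h : Y ⟶ Z)
    (a : F.obj X) : (F.map (g ≫ h)).obj a = (F.map h).obj ((F.map g).obj a) := by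
  rw [F.map_comp]; rfl

lemma res_res (F : Cᵒᵖ ⥤ Grpd.{u, u}) {V W T : C} (g : V ⟶ W) (h : W ⟶ T)
    (x : F.obj (op T)) :
    (F.map g.op).obj ((F.map h.op).obj x) = (F.map (g ≫ h).op).obj x := by
  rw [op_comp, F.map_comp]; rfl

lemma nat_obj_eq (φ : F ⟶ G) {X Y : C} (h : Y ⟶ X) (a : F.obj (op X)) :
    (φ.app (op Y)).obj ((F.map h.op).obj a) = (G.map h.op).obj ((φ.app (op X)).obj a) :=
  congrArg (fun Φ : ↑(F.obj (op X)) ⥤ ↑(G.obj (op Y)) => Φ.obj a) (φ.naturality h.op)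

/-- The presheaf `π₀F` of isomorphism classes of a presheaf of groupoids. -/
def pi0 (F : Cᵒᵖ ⥤ Grpd.{u, u}) : Cᵒᵖ ⥤ Type u where
  obj X := Quot (fun a b : F.obj X => Nonempty (a ≅ b))
  map {X Y} g := TypeCat.ofHom (Quot.map (F.map g).obj
    (fun a b e => e.elim fun e => ⟨(F.map g).mapIso e⟩))
  map_id X := by
    ext q
    obtain ⟨a⟩ := q
    exact congrArg (Quot.mk _) (grpd_map_obj_id F X a)
  map_comp {X Y Z} g h := by
    ext q
    obtain ⟨a⟩ := q
    exact congrArg (Quot.mk _) (grpd_map_obj_comp F g h a)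

/-- The map induced on `π₀` by a map of presheaves of groupoids. -/
def pi0Map (φ : F ⟶ G) : pi0 F ⟶ pi0 G where
  app X := TypeCat.ofHom (Quot.map (φ.app X).obj
    (fun a b e => e.elim fun e => ⟨(φ.app X).mapIso e⟩))
  naturality X Y g := by
    ext q
    obtain ⟨a⟩ := q
    exact congrArg (Quot.mk _)
      (congrArg (fun Φ : ↑(F.obj X) ⥤ ↑(G.obj Y) => Φ.obj a) (φ.naturality g))

lemma aut_eq (F : Cᵒᵖ ⥤ Grpd.{u, u}) {X : C} (a : F.obj (op X)) {g g' : (Over X)ᵒᵖ}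
    (h : g ⟶ g') :
    (F.map g'.unop.hom.op).obj a =
      (F.map h.unop.left.op).obj ((F.map g.unop.hom.op).obj a) := by
  rw [res_res, Over.w h.unop]

/-- The presheaf of automorphism groups `Aut_F(a)` on `C/X`, for `a ∈ F(X)` (in a
groupoid, the endomorphisms of an object are exactly its automorphisms). -/
def autPre (F : Cᵒᵖ ⥤ Grpd.{u, u}) (X : C) (a : F.obj (op X)) : (Over X)ᵒᵖ ⥤ Type u where
  obj g := ((F.map g.unop.hom.op).obj a ⟶ (F.map g.unop.hom.op).obj a)
  map {g g'} h := TypeCat.ofHom fun e =>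
    eqToHom (aut_eq F a h) ≫ (F.map h.unop.left.op).map e ≫ eqToHom (aut_eq F a h).symm
  map_id := by
    intro g
    ext e
    have h : (𝟙 g : g ⟶ g).unop.left = 𝟙 g.unop.left := rfl
    have h2 := Functor.congr_hom (show F.map ((𝟙 g : g ⟶ g).unop.left.op) = 𝟙 _ by
      rw [h, op_id, F.map_id]) e
    show eqToHom _ ≫ (F.map (𝟙 g : g ⟶ g).unop.left.op).map e ≫ eqToHom _ = e
    simp only [h2, eqToHom_trans]
    simp only [show ((𝟙 (F.obj (op g.unop.left)) : _ ⟶ _)).map e = e from rfl]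
    simp
  map_comp := by
    intro g g' g'' h h'
    ext e
    have h2 := Functor.congr_hom (show F.map ((h ≫ h').unop.left.op)
        = F.map h.unop.left.op ≫ F.map h'.unop.left.op by
      rw [show (h ≫ h').unop.left = h'.unop.left ≫ h.unop.left from rfl, op_comp,
        F.map_comp]) e
    show eqToHom _ ≫ (F.map (h ≫ h').unop.left.op).map e ≫ eqToHom _ =
      eqToHom _ ≫ (F.map h'.unop.left.op).map
        (eqToHom _ ≫ (F.map h.unop.left.op).map e ≫ eqToHom _) ≫ eqToHom _
    simp only [types_comp_apply, h2]
    rw [show ∀ {A B : ↑(F.obj (op g.unop.left))} (x : A ⟶ B),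
        ((F.map h.unop.left.op ≫ F.map h'.unop.left.op)).map x
        = (F.map h'.unop.left.op).map ((F.map h.unop.left.op).map x) from fun _ => rfl]
    simp [eqToHom_map]

/-- The map induced by `φ : F ⟶ G` on automorphism presheaves. -/
def autMap (φ : F ⟶ G) (X : C) (a : F.obj (op X)) :
    autPre F X a ⟶ autPre G X ((φ.app (op X)).obj a) where
  app g := TypeCat.ofHom fun e =>
    eqToHom (nat_obj_eq φ g.unop.hom a).symm ≫ (φ.app (op g.unop.left)).map e ≫
      eqToHom (nat_obj_eq φ g.unop.hom a)
  naturality := by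
    intro g g' h
    ext (e : (F.map g.unop.hom.op).obj a ⟶ (F.map g.unop.hom.op).obj a)
    have h2 := Functor.congr_hom (φ.naturality h.unop.left.op) e
    show eqToHom _ ≫ (φ.app (op g'.unop.left)).map
        (eqToHom _ ≫ (F.map h.unop.left.op).map e ≫ eqToHom _) ≫ eqToHom _ =
      eqToHom _ ≫ (G.map h.unop.left.op).map
        (eqToHom _ ≫ (φ.app (op g.unop.left)).map e ≫ eqToHom _) ≫ eqToHom _
    rw [show ∀ {A B : ↑(F.obj (op g.unop.left))} (x : A ⟶ B),
        ((F.map h.unop.left.op ≫ φ.app (op g'.unop.left))).map x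
        = (φ.app (op g'.unop.left)).map ((F.map h.unop.left.op).map x) from fun _ => rfl] at h2
    rw [show ∀ {A B : ↑(F.obj (op g.unop.left))} (x : A ⟶ B),
        ((φ.app (op g.unop.left) ≫ G.map h.unop.left.op)).map x
        = (G.map h.unop.left.op).map ((φ.app (op g.unop.left)).map x) from fun _ => rfl] at h2
    simp [h2, eqToHom_map]

variable (K : Pretopology C)

/-- A map of presheaves of groupoids induces an isomorphism on sheaves of homotopy
groups if the sheafification of `π₀φ` is an isomorphism and, for every `X` and every
object `a` of `F(X)`, the sheafification of `Aut_F(a) ⟶ Aut_G(φ(a))` is an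
isomorphism of sheaves on `C/X`. -/
def InducesIsoOnHomotopySheaves (φ : F ⟶ G) : Prop :=
  IsIso ((presheafToSheaf (K.toGrothendieck) (Type u)).map (pi0Map φ)) ∧
  ∀ (X : C) (a : F.obj (op X)),
    IsIso ((presheafToSheaf ((K.toGrothendieck).over X) (Type u)).map (autMap φ X a))

/-- The local lifting conditions (L1), (L2), (L3) for a map of presheaves of
groupoids. -/
structure LocalLiftingConditions (φ : F ⟶ G) : Prop where
  obj_lift : ∀ (X : C) (b : G.obj (op X)),
    ∃ (ι : Type u) (V : ι → C) (g : ∀ i, V i ⟶ X),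
      Presieve.ofArrows V g ∈ K.coverings X ∧
      ∀ i, ∃ a : F.obj (op (V i)),
        Nonempty ((φ.app (op (V i))).obj a ≅ (G.map (g i).op).obj b)
  hom_lift : ∀ (X : C) (a a' : F.obj (op X))
    (k : (φ.app (op X)).obj a ⟶ (φ.app (op X)).obj a'),
    ∃ (ι : Type u) (V : ι → C) (g : ∀ i, V i ⟶ X),
      Presieve.ofArrows V g ∈ K.coverings X ∧
      ∀ i, ∃ h : (F.map (g i).op).obj a ⟶ (F.map (g i).op).obj a',
        (φ.app (op (V i))).map h =
          eqToHom (nat_obj_eq φ (g i) a) ≫ (G.map (g i).op).map k ≫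
            eqToHom (nat_obj_eq φ (g i) a').symm
  hom_sep : ∀ (X : C) (a : F.obj (op X)) (h : a ⟶ a),
    (φ.app (op X)).map h = 𝟙 ((φ.app (op X)).obj a) →
    ∃ (ι : Type u) (V : ι → C) (g : ∀ i, V i ⟶ X),
      Presieve.ofArrows V g ∈ K.coverings X ∧
      ∀ i, (F.map (g i).op).map h = 𝟙 ((F.map (g i).op).obj a)

end Pi0Aut

/-!
Sheafification inverts a map of presheaves of sets exactly when the map is locally injective and
locally surjective; these conditions, like the lifting conditions, say that certain sieves are
covering. Local surjectivity of `π₀φ` is (L1). Local injectivity of `Aut_F(a) ⟶ Aut_G(φ a)` is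
(L3), applied to `x ≫ y⁻¹` for automorphisms `x`, `y` with the same image. (L2) amounts to local
injectivity of `π₀φ` together with local surjectivity on automorphisms: where `a` and `a'` become
isomorphic through some `e`, a morphism `k : φ a ⟶ φ a'` is the automorphism `k ≫ φ(e)⁻¹`
followed by `φ(e)`.
-/

theorem CategoryTheory.Pretopology.mem_toGrothendieck_iff_exists_ofArrows (K : Pretopology C)
    {X : C} (S : Sieve X) :
    S ∈ K.toGrothendieck X ↔ ∃ (ι : Type u) (V : ι → C) (g : ∀ i, V i ⟶ X),
      Presieve.ofArrows V g ∈ K.coverings X ∧ ∀ i, S (g i) := by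
  rw [Pretopology.mem_toGrothendieck]
  constructor
  · rintro ⟨R, hR, hRS⟩
    obtain ⟨ι, V, g, rfl⟩ := R.exists_eq_ofArrows
    exact ⟨ι, V, g, hR, Presieve.ofArrows_le_iff.1 hRS⟩
  · rintro ⟨ι, V, g, hg, hS⟩
    exact ⟨_, hg, Presieve.ofArrows_le_iff.2 hS⟩

lemma eqToHom_comp_comp_eqToHom_inj {D : Type*} [Category D] {A A' B B' : D} (p : A = A')
    (q : B' = B) (f g : A' ⟶ B') :
    eqToHom p ≫ f ≫ eqToHom q = eqToHom p ≫ g ≫ eqToHom q ↔ f = g := by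
  subst p q
  simp

section Lifting

variable {F G : Cᵒᵖ ⥤ Grpd.{u, u}}

@[simp]
lemma map_map_op (F : Cᵒᵖ ⥤ Grpd.{u, u}) {X Y Z : C} (f : Y ⟶ X) (g : Z ⟶ Y)
    {a a' : F.obj (op X)} (k : a ⟶ a') :
    (F.map g.op).map ((F.map f.op).map k) =
      eqToHom (res_res F g f a) ≫ (F.map (g ≫ f).op).map k ≫
        eqToHom (res_res F g f a').symm :=
  Functor.congr_hom (by rw [op_comp, F.map_comp] : F.map f.op ≫ F.map g.op = F.map (g ≫ f).op) k

@[simp]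
lemma app_map_map_op (φ : F ⟶ G) {X Y : C} (f : Y ⟶ X) {a a' : F.obj (op X)} (k : a ⟶ a') :
    (φ.app (op Y)).map ((F.map f.op).map k) =
      eqToHom (nat_obj_eq φ f a) ≫ (G.map f.op).map ((φ.app (op X)).map k) ≫
        eqToHom (nat_obj_eq φ f a').symm :=
  Functor.congr_hom (φ.naturality f.op) k

@[simp]
lemma autPre_map_apply (F : Cᵒᵖ ⥤ Grpd.{u, u}) {X : C} (a : F.obj (op X)) {U V : Over X}
    (m : V ⟶ U) (e : (F.map U.hom.op).obj a ⟶ (F.map U.hom.op).obj a) :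
    (autPre F X a).map m.op e =
      eqToHom (aut_eq F a m.op) ≫ (F.map m.left.op).map e ≫ eqToHom (aut_eq F a m.op).symm :=
  rfl

@[simp]
lemma autMap_app_apply (φ : F ⟶ G) {X : C} (a : F.obj (op X)) (U : Over X)
    (e : (F.map U.hom.op).obj a ⟶ (F.map U.hom.op).obj a) :
    (autMap φ X a).app (op U) e =
      eqToHom (nat_obj_eq φ U.hom a).symm ≫ (φ.app (op U.left)).map e ≫
        eqToHom (nat_obj_eq φ U.hom a) :=
  rfl

lemma autMap_app_eq_iff (φ : F ⟶ G) {X : C} (a : F.obj (op X)) (U : Over X)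
    (x y : (F.map U.hom.op).obj a ⟶ (F.map U.hom.op).obj a) :
    (autMap φ X a).app (op U) x = (autMap φ X a).app (op U) y ↔
      (φ.app (op U.left)).map x = (φ.app (op U.left)).map y := by
  simp only [autMap_app_apply]
  exact eqToHom_comp_comp_eqToHom_inj _ _ _ _

lemma pi0_mk_eq_mk_iff {X : Cᵒᵖ} (a b : F.obj X) :
    (Quot.mk _ a : (pi0 F).obj X) = Quot.mk _ b ↔ Nonempty (a ≅ b) := by
  have hequiv : Equivalence (fun a b : F.obj X => Nonempty (a ≅ b)) :=
    ⟨fun a => ⟨Iso.refl a⟩, fun ⟨e⟩ => ⟨e.symm⟩, fun ⟨e⟩ ⟨e'⟩ => ⟨e ≪≫ e'⟩⟩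
  exact ⟨fun h => hequiv.eqvGen_iff.1 (Quot.eq.1 h), fun h => Quot.sound h⟩

def essImageSieve (φ : F ⟶ G) {X : C} (b : G.obj (op X)) : Sieve X where
  arrows Y f := ∃ a : F.obj (op Y), Nonempty ((φ.app (op Y)).obj a ≅ (G.map f.op).obj b)
  downward_closed := by
    rintro Y Z f ⟨a, ⟨e⟩⟩ g
    exact ⟨(F.map g.op).obj a, ⟨eqToIso (nat_obj_eq φ g a) ≪≫ (G.map g.op).mapIso e ≪≫
      eqToIso (res_res G g f b)⟩⟩

def liftSieve (φ : F ⟶ G) {X : C} (a a' : F.obj (op X))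
    (k : (φ.app (op X)).obj a ⟶ (φ.app (op X)).obj a') : Sieve X where
  arrows Y f := ∃ h : (F.map f.op).obj a ⟶ (F.map f.op).obj a',
    (φ.app (op Y)).map h = eqToHom (nat_obj_eq φ f a) ≫ (G.map f.op).map k ≫
      eqToHom (nat_obj_eq φ f a').symm
  downward_closed := by
    rintro Y Z f ⟨h, hh⟩ g
    exact ⟨eqToHom (res_res F g f a).symm ≫ (F.map g.op).map h ≫ eqToHom (res_res F g f a'),
      by simp [hh, eqToHom_map]⟩

def trivializingSieve (F : Cᵒᵖ ⥤ Grpd.{u, u}) {X : C} {a : F.obj (op X)} (h : a ⟶ a) :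
    Sieve X where
  arrows Y f := (F.map f.op).map h = 𝟙 _
  downward_closed := by
    intro Y Z f hf g
    have := congrArg (F.map g.op).map hf
    rw [map_map_op, (F.map g.op).map_id, eqToHom_comp_iff, comp_eqToHom_iff] at this
    simpa using this

lemma localLiftingConditions_iff (K : Pretopology C) (φ : F ⟶ G) :
    LocalLiftingConditions K φ ↔
      (∀ (X : C) (b : G.obj (op X)), essImageSieve φ b ∈ K.toGrothendieck X) ∧
      (∀ (X : C) (a a' : F.obj (op X)) (k : (φ.app (op X)).obj a ⟶ (φ.app (op X)).obj a'),
        liftSieve φ a a' k ∈ K.toGrothendieck X) ∧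
      ∀ (X : C) (a : F.obj (op X)) (h : a ⟶ a),
        (φ.app (op X)).map h = 𝟙 _ → trivializingSieve F h ∈ K.toGrothendieck X := by
  simp only [K.mem_toGrothendieck_iff_exists_ofArrows]
  exact ⟨fun ⟨h₁, h₂, h₃⟩ => ⟨h₁, h₂, h₃⟩, fun ⟨h₁, h₂, h₃⟩ => ⟨h₁, h₂, h₃⟩⟩

lemma imageSieve_pi0Map_mk (φ : F ⟶ G) {X : C} (b : G.obj (op X)) :
    Presheaf.imageSieve (pi0Map φ) (Quot.mk _ b : (pi0 G).obj (op X)) = essImageSieve φ b := by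
  ext Y f
  constructor
  · rintro ⟨⟨a⟩, ha⟩
    exact ⟨a, (pi0_mk_eq_mk_iff _ _).1 ha⟩
  · rintro ⟨a, e⟩
    exact ⟨Quot.mk _ a, Quot.sound e⟩

lemma isLocallySurjective_pi0Map_iff (J : GrothendieckTopology C) (φ : F ⟶ G) :
    Presheaf.IsLocallySurjective J (pi0Map φ) ↔
      ∀ (X : C) (b : G.obj (op X)), essImageSieve φ b ∈ J X := by
  refine ⟨fun h X b => ?_, fun h => ⟨fun {X} s => ?_⟩⟩
  · rw [← imageSieve_pi0Map_mk]
    exact Presheaf.imageSieve_mem J (pi0Map φ) (U := op X) _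
  · obtain ⟨b⟩ := s
    rw [imageSieve_pi0Map_mk]
    exact h X b

lemma liftSieve_le_liftSieve_comp_map (φ : F ⟶ G) {Y : C} {b b' b'' : F.obj (op Y)}
    (k : (φ.app (op Y)).obj b ⟶ (φ.app (op Y)).obj b') (e : b' ⟶ b'') :
    liftSieve φ b b' k ≤ liftSieve φ b b'' (k ≫ (φ.app (op Y)).map e) := by
  rintro Z g ⟨h, hh⟩
  exact ⟨h ≫ (F.map g.op).map e, by simp [hh]⟩

lemma liftSieve_restrict_le_pullback (φ : F ⟶ G) {X Y : C} (f : Y ⟶ X) {a a' : F.obj (op X)}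
    (k : (φ.app (op X)).obj a ⟶ (φ.app (op X)).obj a') :
    liftSieve φ ((F.map f.op).obj a) ((F.map f.op).obj a')
        (eqToHom (nat_obj_eq φ f a) ≫ (G.map f.op).map k ≫ eqToHom (nat_obj_eq φ f a').symm) ≤
      (liftSieve φ a a' k).pullback f := by
  rintro Z g ⟨h, hh⟩
  exact ⟨eqToHom (res_res F g f a).symm ≫ h ≫ eqToHom (res_res F g f a'),
    by simp [hh, eqToHom_map]⟩

lemma liftSieve_eqToHom_conj (φ : F ⟶ G) {X : C} {a₁ a₁' a₂ a₂' : F.obj (op X)}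
    (ha : a₁ = a₂) (ha' : a₁' = a₂')
    (p : (φ.app (op X)).obj a₁ = (φ.app (op X)).obj a₂)
    (p' : (φ.app (op X)).obj a₂' = (φ.app (op X)).obj a₁')
    (k : (φ.app (op X)).obj a₂ ⟶ (φ.app (op X)).obj a₂') :
    liftSieve φ a₁ a₁' (eqToHom p ≫ k ≫ eqToHom p') = liftSieve φ a₂ a₂' k := by
  subst ha ha'
  simp

lemma overEquiv_imageSieve_autMap (φ : F ⟶ G) {X : C} (a : F.obj (op X)) (U : Over X)
    (s : (G.map U.hom.op).obj ((φ.app (op X)).obj a) ⟶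
      (G.map U.hom.op).obj ((φ.app (op X)).obj a)) :
    Sieve.overEquiv U (Presheaf.imageSieve (autMap φ X a) s) =
      liftSieve φ ((F.map U.hom.op).obj a) ((F.map U.hom.op).obj a)
        (eqToHom (nat_obj_eq φ U.hom a) ≫ s ≫ eqToHom (nat_obj_eq φ U.hom a).symm) := by
  ext Z g
  rw [Sieve.overEquiv_iff]
  constructor
  · rintro ⟨(t : (F.map (g ≫ U.hom).op).obj a ⟶ (F.map (g ≫ U.hom).op).obj a), ht⟩
    refine ⟨eqToHom (res_res F g U.hom a) ≫ t ≫ eqToHom (res_res F g U.hom a).symm, ?_⟩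
    rw [autMap_app_apply, autPre_map_apply] at ht
    replace ht := (comp_eqToHom_iff _ _ _).1 ((eqToHom_comp_iff _ _ _).1 ht)
    dsimp only [Over.mk_left] at ht
    simp only [op_comp, CategoryTheory.Functor.map_comp, eqToHom_map, ht, Over.mk_hom,
      Over.mk_left, Quiver.Hom.unop_op, eqToHom_trans_assoc, Category.assoc, eqToHom_trans]
    rfl
  · rintro ⟨w, hw⟩
    refine ⟨eqToHom (res_res F g U.hom a).symm ≫ w ≫ eqToHom (res_res F g U.hom a), ?_⟩
    simp only [Over.mk_left, Over.mk_hom, op_comp, autMap_app_apply, autPre_map_apply,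
      CategoryTheory.Functor.map_comp, eqToHom_map, hw, Category.assoc, eqToHom_trans,
      eqToHom_trans_assoc, Quiver.Hom.unop_op]
    rfl

lemma imageSieve_autMap_mem_over_iff (J : GrothendieckTopology C) (φ : F ⟶ G) {X : C}
    (a : F.obj (op X)) (U : Over X)
    (s : (G.map U.hom.op).obj ((φ.app (op X)).obj a) ⟶
      (G.map U.hom.op).obj ((φ.app (op X)).obj a)) :
    Presheaf.imageSieve (autMap φ X a) s ∈ J.over X U ↔
      liftSieve φ ((F.map U.hom.op).obj a) ((F.map U.hom.op).obj a)
        (eqToHom (nat_obj_eq φ U.hom a) ≫ s ≫ eqToHom (nat_obj_eq φ U.hom a).symm) ∈ J U.left := by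
  rw [GrothendieckTopology.mem_over_iff, overEquiv_imageSieve_autMap]

lemma isLocallyInjective_pi0Map_of_liftSieve_mem (J : GrothendieckTopology C) (φ : F ⟶ G)
    (h : ∀ (X : C) (a a' : F.obj (op X)) (k : (φ.app (op X)).obj a ⟶ (φ.app (op X)).obj a'),
      liftSieve φ a a' k ∈ J X) :
    Presheaf.IsLocallyInjective J (pi0Map φ) := by
  refine ⟨fun {X} x y hxy => ?_⟩
  obtain ⟨a⟩ := x
  obtain ⟨a'⟩ := y
  obtain ⟨e⟩ := (pi0_mk_eq_mk_iff _ _).1 hxy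
  refine J.superset_covering ?_ (h X.unop a a' e.hom)
  rintro Y f ⟨w, -⟩
  exact Quot.sound ⟨Groupoid.isoEquivHom _ _ |>.symm w⟩

lemma isLocallySurjective_autMap_of_liftSieve_mem (J : GrothendieckTopology C) (φ : F ⟶ G)
    (h : ∀ (X : C) (a a' : F.obj (op X)) (k : (φ.app (op X)).obj a ⟶ (φ.app (op X)).obj a'),
      liftSieve φ a a' k ∈ J X)
    (X : C) (a : F.obj (op X)) :
    Presheaf.IsLocallySurjective (J.over X) (autMap φ X a) :=
  ⟨fun {U} s => (imageSieve_autMap_mem_over_iff J φ a U s).2 (h _ _ _ _)⟩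

lemma liftSieve_mem_of_isLocallySurjective_autMap (J : GrothendieckTopology C) (φ : F ⟶ G)
    (h : ∀ (X : C) (a : F.obj (op X)), Presheaf.IsLocallySurjective (J.over X) (autMap φ X a))
    (Y : C) (b : F.obj (op Y)) (k : (φ.app (op Y)).obj b ⟶ (φ.app (op Y)).obj b) :
    liftSieve φ b b k ∈ J Y := by
  have hb : (F.map (𝟙 Y).op).obj b = b := grpd_map_obj_id F _ b
  have q : (G.map (𝟙 Y).op).obj ((φ.app (op Y)).obj b) = (φ.app (op Y)).obj b :=
    grpd_map_obj_id G _ _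
  let s : (G.map (𝟙 Y).op).obj ((φ.app (op Y)).obj b) ⟶
      (G.map (𝟙 Y).op).obj ((φ.app (op Y)).obj b) :=
    eqToHom q ≫ k ≫ eqToHom q.symm
  have hmem := (imageSieve_autMap_mem_over_iff J φ b (Over.mk (𝟙 Y)) s).1
    ((h Y b).imageSieve_mem (U := Over.mk (𝟙 Y)) s)
  simp only [s, Over.mk_hom, Over.mk_left, Category.assoc, eqToHom_trans,
    eqToHom_trans_assoc] at hmem
  rwa [liftSieve_eqToHom_conj φ hb hb] at hmem

lemma liftSieve_mem_of_isLocallyInjective_pi0Map (J : GrothendieckTopology C) (φ : F ⟶ G)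
    [Presheaf.IsLocallyInjective J (pi0Map φ)]
    (h : ∀ (Y : C) (b : F.obj (op Y)) (k : (φ.app (op Y)).obj b ⟶ (φ.app (op Y)).obj b),
      liftSieve φ b b k ∈ J Y)
    {X : C} (a a' : F.obj (op X)) (k : (φ.app (op X)).obj a ⟶ (φ.app (op X)).obj a') :
    liftSieve φ a a' k ∈ J X := by
  have hpi : (pi0Map φ).app (op X) (Quot.mk _ a) = (pi0Map φ).app (op X) (Quot.mk _ a') :=
    Quot.sound ⟨(Groupoid.isoEquivHom _ _).symm k⟩
  refine J.transitive (Presheaf.equalizerSieve_mem J (pi0Map φ) _ _ hpi) _ fun Y f hf => ?_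
  obtain ⟨e⟩ := (pi0_mk_eq_mk_iff _ _).1 hf
  let kf := eqToHom (nat_obj_eq φ f a) ≫ (G.map f.op).map k ≫ eqToHom (nat_obj_eq φ f a').symm
  -- `kf ≫ φ(e⁻¹)` is an automorphism of `φ(a|_Y)`; its local lifts, composed with `e`, lift `kf`
  refine J.superset_covering ?_ (h Y _ (kf ≫ (φ.app (op Y)).map e.inv))
  refine (liftSieve_le_liftSieve_comp_map φ _ e.hom).trans ?_
  rw [Category.assoc, ← (φ.app (op Y)).map_comp, e.inv_hom_id, (φ.app (op Y)).map_id,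
    Category.comp_id]
  exact liftSieve_restrict_le_pullback φ f k

lemma liftSieve_mem_iff (J : GrothendieckTopology C) (φ : F ⟶ G) :
    (∀ (X : C) (a a' : F.obj (op X)) (k : (φ.app (op X)).obj a ⟶ (φ.app (op X)).obj a'),
        liftSieve φ a a' k ∈ J X) ↔
      Presheaf.IsLocallyInjective J (pi0Map φ) ∧
        ∀ (X : C) (a : F.obj (op X)), Presheaf.IsLocallySurjective (J.over X) (autMap φ X a) :=
  ⟨fun h => ⟨isLocallyInjective_pi0Map_of_liftSieve_mem J φ h,
      isLocallySurjective_autMap_of_liftSieve_mem J φ h⟩,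
    fun ⟨_, h⟩ _ => liftSieve_mem_of_isLocallyInjective_pi0Map J φ
      (liftSieve_mem_of_isLocallySurjective_autMap J φ h)⟩

lemma overEquiv_equalizerSieve_autPre (F : Cᵒᵖ ⥤ Grpd.{u, u}) {X : C} (a : F.obj (op X))
    (U : Over X) (x y : (F.map U.hom.op).obj a ⟶ (F.map U.hom.op).obj a) {Z : C}
    (g : Z ⟶ U.left) :
    Sieve.overEquiv U (Presheaf.equalizerSieve (F := autPre F X a) (X := op U) x y) g ↔
      (F.map g.op).map x = (F.map g.op).map y := by
  rw [Sieve.overEquiv_iff]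
  exact eqToHom_comp_comp_eqToHom_inj _ _ _ _

lemma isLocallyInjective_autMap_iff (J : GrothendieckTopology C) (φ : F ⟶ G) :
    (∀ (X : C) (a : F.obj (op X)), Presheaf.IsLocallyInjective (J.over X) (autMap φ X a)) ↔
      ∀ (X : C) (a : F.obj (op X)) (h : a ⟶ a),
        (φ.app (op X)).map h = 𝟙 _ → trivializingSieve F h ∈ J X := by
  constructor
  · intro hinj X a h hh
    have q : (F.map (𝟙 X).op).obj a = a := grpd_map_obj_id F _ a
    let x : (F.map (𝟙 X).op).obj a ⟶ (F.map (𝟙 X).op).obj a := eqToHom q ≫ h ≫ eqToHom q.symm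
    have hx : (autMap φ X a).app (op (Over.mk (𝟙 X))) x =
        (autMap φ X a).app (op (Over.mk (𝟙 X))) (𝟙 _) := by
      rw [autMap_app_eq_iff]
      simp [x, hh, eqToHom_map]
    have hmem := (hinj X a).equalizerSieve_mem _ _ hx
    rw [GrothendieckTopology.mem_over_iff] at hmem
    refine J.superset_covering (fun Z g hg => ?_) hmem
    rw [overEquiv_equalizerSieve_autPre] at hg
    simp only [x, CategoryTheory.Functor.map_comp, CategoryTheory.Functor.map_id, eqToHom_map,
      eqToHom_comp_iff, comp_eqToHom_iff] at hg
    show (F.map g.op).map h = 𝟙 _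
    simpa using hg
  · intro hL X a
    refine ⟨fun {U} x y hxy => ?_⟩
    obtain ⟨U⟩ := U
    change (F.map U.hom.op).obj a ⟶ (F.map U.hom.op).obj a at x y
    have hφ : (φ.app (op U.left)).map (x ≫ inv y) = 𝟙 _ := by
      simp [(autMap_app_eq_iff φ a U x y).1 hxy]
    rw [GrothendieckTopology.mem_over_iff]
    refine J.superset_covering (fun Z g (hg : (F.map g.op).map (x ≫ inv y) = 𝟙 _) => ?_)
      (hL _ _ _ hφ)
    rw [overEquiv_equalizerSieve_autPre]
    simpa using hg

end Lifting

/-- A map of presheaves of groupoids on a site induces an isomorphism on sheaves of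
homotopy groups if and only if it satisfies the local lifting conditions. -/
theorem inducesIso_iff_localLifting {F G : Cᵒᵖ ⥤ Grpd.{u, u}} (K : Pretopology C)
    (φ : F ⟶ G) :
    InducesIsoOnHomotopySheaves K φ ↔ LocalLiftingConditions K φ := by
  rw [InducesIsoOnHomotopySheaves, localLiftingConditions_iff]
  simp only [← GrothendieckTopology.W_iff, GrothendieckTopology.W_iff_isLocallyBijective,
    forall_and]
  rw [isLocallySurjective_pi0Map_iff, isLocallyInjective_autMap_iff, liftSieve_mem_iff]
  tauto
end

section
/- Let C be a small category, I a small category, and D : I → Grpd/C a diagram of categories fibered in groupoids over C (with morphisms functors over C). Then the colimit of D computed in Cat/C is pre-fibered in groupoids over C. -/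
open CategoryTheory

universe u v

/-- A functor `F : E ⥤ C` is pre-fibered in groupoids if morphisms of `C` lift, and
lifts of commutative triangles exist and are unique up to composition with an
automorphism over the identity. -/
structure IsPreFiberedInGroupoids {E : Type*} {C : Type*} [Category E] [Category C]
    (F : E ⥤ C) : Prop where
  lift : ∀ ⦃X Y : C⦄ (f : Y ⟶ X) (X' : E) (hX : F.obj X' = X),
    ∃ (Y' : E) (f' : Y' ⟶ X') (hY : F.obj Y' = Y),
      F.map f' = eqToHom hY ≫ f ≫ eqToHom hX.symm
  liftTriangle : ∀ ⦃Y' Z' X' : E⦄ (f' : Y' ⟶ X') (g' : Z' ⟶ X')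
    (h : F.obj Y' ⟶ F.obj Z'), h ≫ F.map g' = F.map f' →
      ∃ h' : Y' ⟶ Z', h' ≫ g' = f' ∧ F.map h' = h
  liftUniqueUpToAut : ∀ ⦃Y' Z' X' : E⦄ (g' : Z' ⟶ X') (h₁ h₂ : Y' ⟶ Z'),
    h₁ ≫ g' = h₂ ≫ g' → F.map h₁ = F.map h₂ →
      ∃ φ : Y' ⟶ Y', IsIso φ ∧ F.map φ = 𝟙 (F.obj Y') ∧ φ ≫ h₁ = h₂

/-!
Write `E` for the colimit, `F : E ⥤ C` for its structure functor and `ιᵢ` for the legs.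
Testing the universal property against three cocones (a full subcategory of `E`, a wide
subcategory of `E`, and `C` times the codiscrete category on the objects of the pieces modulo
the transition functors) shows: every object of `E` is some `ιᵢ x`, every morphism of `E` is a
composite of images `ιᵢ m`, and `ιᵢ x = ιⱼ y` only if `(i, x)` and `(j, y)` are joined by a
zigzag of transition functors. Using the lifting properties of the fibered pieces, one shows
along such zigzags and composites that every morphism into `ιᵢ x` factors as `ψ ≫ ιᵢ b` with `ψ`
an isomorphism and `b : y ⟶ x` in the `i`-th piece. Lifting a triangle in `E` then reduces to
lifting a triangle in a single piece, and two lifts with the same image differ by the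
automorphism obtained by comparing their factorizations, which is invertible because categories
fibered in groupoids reflect isomorphisms.
-/

theorem IsFiberedInGroupoids.isIso_of_isIso_map {E C : Type*} [Category E] [Category C]
    {F : E ⥤ C} (hF : IsFiberedInGroupoids F) {A B : E} (m : A ⟶ B) [IsIso (F.map m)] :
    IsIso m := by
  obtain ⟨n, ⟨hnm, hFn⟩, -⟩ := hF.uniqueLift (𝟙 B) m (inv (F.map m)) (by simp)
  obtain ⟨_, _, hunique⟩ := hF.uniqueLift m m (𝟙 _) (by simp)
  have hmn : m ≫ n = 𝟙 A :=
    (hunique _ ⟨by simp [hnm], by simp [hFn]⟩).trans (hunique _ ⟨by simp, by simp⟩).symm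
  exact ⟨n, hmn, hnm⟩

section FactorsThrough

variable {C E P P' : Type*} [Category C] [Category E] [Category P] [Category P']

def FactorsThrough (L : P ⥤ E) {R B : E} (g : R ⟶ B) (x : P) : Prop :=
  ∃ (h : L.obj x = B) (y : P) (b : y ⟶ x) (ψ : R ⟶ L.obj y),
    IsIso ψ ∧ ψ ≫ L.map b ≫ eqToHom h = g

theorem factorsThrough_id (L : P ⥤ E) (x : P) : FactorsThrough L (𝟙 (L.obj x)) x :=
  ⟨rfl, x, 𝟙 x, 𝟙 _, inferInstance, by simp⟩

theorem FactorsThrough.comp_map {L : P ⥤ E} {R : E} {u v : P} {g : R ⟶ L.obj u}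
    (hg : FactorsThrough L g u) (m : u ⟶ v) : FactorsThrough L (g ≫ L.map m) v := by
  obtain ⟨_, y, b, ψ, hψ, rfl⟩ := hg
  exact ⟨rfl, y, b ≫ m, ψ, hψ, by simp⟩

theorem factorsThrough_comp_iff {T : P ⥤ P'} {L : P' ⥤ E} {F : E ⥤ C}
    (hT : IsFiberedInGroupoids ((T ⋙ L) ⋙ F)) (hL : IsFiberedInGroupoids (L ⋙ F))
    {R B : E} (g : R ⟶ B) (x : P) :
    FactorsThrough (T ⋙ L) g x ↔ FactorsThrough L g (T.obj x) := by
  constructor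
  · rintro ⟨h, y, b, ψ, hψ, rfl⟩
    exact ⟨h, T.obj y, T.map b, ψ, hψ, rfl⟩
  · rintro ⟨h, y, b, ψ, hψ, rfl⟩
    subst h
    -- lift `F (L b)` to the piece `P`, then compare the two lifts inside `P'`
    obtain ⟨y₁, b₁, hy₁, hb₁⟩ := hT.lift ((L ⋙ F).map b) x rfl
    obtain ⟨m, ⟨hm, hFm⟩, -⟩ := hL.uniqueLift b (T.map b₁) (eqToHom hy₁.symm)
      (by simpa using congrArg (eqToHom hy₁.symm ≫ ·) hb₁)
    have : IsIso ((L ⋙ F).map m) := hFm ▸ inferInstance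
    have : IsIso m := hL.isIso_of_isIso_map m
    exact ⟨rfl, y₁, b₁, ψ ≫ L.map m, inferInstance, by simp [← hm]⟩

theorem FactorsThrough.exists_lift {L : P ⥤ E} {F : E ⥤ C} (hL : IsFiberedInGroupoids (L ⋙ F))
    {Y' Z' : E} {x : P} {f' : Y' ⟶ L.obj x} {g' : Z' ⟶ L.obj x}
    (hf : FactorsThrough L f' x) (hg : FactorsThrough L g' x)
    (h : F.obj Y' ⟶ F.obj Z') (hcomm : h ≫ F.map g' = F.map f') :
    ∃ h' : Y' ⟶ Z', h' ≫ g' = f' ∧ F.map h' = h := by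
  obtain ⟨_, yf, bf, ψf, _, rfl⟩ := hf
  obtain ⟨_, yg, bg, ψg, _, rfl⟩ := hg
  obtain ⟨m, ⟨hm, hFm⟩, -⟩ := hL.uniqueLift bf bg (inv (F.map ψf) ≫ h ≫ F.map ψg)
    (by simpa using congrArg (inv (F.map ψf) ≫ ·) hcomm)
  refine ⟨ψf ≫ L.map m ≫ inv ψg, by simp [← hm], ?_⟩
  simp only [Functor.comp_map] at hFm
  simp [hFm]

theorem FactorsThrough.exists_aut {L : P ⥤ E} {F : E ⥤ C} (hL : IsFiberedInGroupoids (L ⋙ F))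
    {Y' : E} {x : P} {h₁ h₂ : Y' ⟶ L.obj x}
    (hh₁ : FactorsThrough L h₁ x) (hh₂ : FactorsThrough L h₂ x)
    (hF : F.map h₁ = F.map h₂) :
    ∃ φ : Y' ⟶ Y', IsIso φ ∧ F.map φ = 𝟙 (F.obj Y') ∧ φ ≫ h₁ = h₂ := by
  obtain ⟨_, y₁, b₁, ψ₁, _, rfl⟩ := hh₁
  obtain ⟨_, y₂, b₂, ψ₂, _, rfl⟩ := hh₂
  obtain ⟨m, ⟨hm, hFm⟩, -⟩ := hL.uniqueLift b₂ b₁ (inv (F.map ψ₂) ≫ F.map ψ₁)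
    (by simpa using congrArg (inv (F.map ψ₂) ≫ ·) hF)
  have : IsIso ((L ⋙ F).map m) := hFm ▸ inferInstance
  have : IsIso m := hL.isIso_of_isIso_map m
  refine ⟨ψ₂ ≫ L.map m ≫ inv ψ₁, inferInstance, ?_, by simp [← hm]⟩
  simp only [Functor.comp_map] at hFm
  simp [hFm]

end FactorsThrough

section Legs

variable {C E J : Type*} [Category C] [Category E] {P : J → Type*} [∀ j, Category (P j)]

def Linked (ι : ∀ j, P j ⥤ E) (a b : Σ j, P j) : Prop :=
  ∃ T : P a.1 ⥤ P b.1, T.obj a.2 = b.2 ∧ T ⋙ ι b.1 = ι a.1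

def legHoms (ι : ∀ j, P j ⥤ E) : MorphismProperty E :=
  MorphismProperty.ofHoms fun m : Σ j, Σ x y : P j, x ⟶ y => (ι m.1).map m.2.2.2

theorem map_mem_legHoms (ι : ∀ j, P j ⥤ E) (j : J) {x y : P j} (m : x ⟶ y) :
    legHoms ι ((ι j).map m) :=
  MorphismProperty.ofHoms.mk (f := fun m : Σ j, Σ x y : P j, x ⟶ y => (ι m.1).map m.2.2.2)
    ⟨j, x, y, m⟩

structure IsPresentedBy (ι : ∀ j, P j ⥤ E) : Prop where
  obj_surj : ∀ A : E, ∃ j x, (ι j).obj x = A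
  hom_gen : (legHoms ι).multiplicativeClosure = ⊤
  eqvGen_linked : ∀ ⦃j j' : J⦄ (x : P j) (x' : P j'),
    (ι j).obj x = (ι j').obj x' → Relation.EqvGen (Linked ι) ⟨j, x⟩ ⟨j', x'⟩

variable {ι : ∀ j, P j ⥤ E} {F : E ⥤ C}

theorem factorsThrough_iff_of_eqvGen (hfib : ∀ j, IsFiberedInGroupoids (ι j ⋙ F))
    {a b : Σ j, P j} (hab : Relation.EqvGen (Linked ι) a b) {R B : E} (g : R ⟶ B) :
    FactorsThrough (ι a.1) g a.2 ↔ FactorsThrough (ι b.1) g b.2 := by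
  induction hab with
  | rel a b hab =>
    obtain ⟨T, hx, hT⟩ := hab
    rw [← hx, ← factorsThrough_comp_iff (hT ▸ hfib a.1) (hfib b.1), hT]
  | refl => rfl
  | symm _ _ _ ih => exact ih.symm
  | trans _ _ _ _ _ ih₁ ih₂ => exact ih₁.trans ih₂

theorem FactorsThrough.of_obj_eq (hP : IsPresentedBy ι)
    (hfib : ∀ j, IsFiberedInGroupoids (ι j ⋙ F)) {R B : E} {g : R ⟶ B} {i : J} {x : P i}
    (hg : FactorsThrough (ι i) g x) {j : J} {y : P j} (hy : (ι j).obj y = B) :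
    FactorsThrough (ι j) g y :=
  (factorsThrough_iff_of_eqvGen hfib (hP.eqvGen_linked x y (hg.fst.trans hy.symm)) g).1 hg

theorem exists_factorsThrough_comp_of_legHoms (hP : IsPresentedBy ι)
    (hfib : ∀ j, IsFiberedInGroupoids (ι j ⋙ F)) {A B : E} {q : A ⟶ B} (hq : legHoms ι q)
    {R : E} {g : R ⟶ A} (hg : ∃ j x, FactorsThrough (ι j) g x) :
    ∃ j x, FactorsThrough (ι j) (g ≫ q) x := by
  obtain ⟨⟨k, u, v, m⟩⟩ := hq
  obtain ⟨j, x, hgx⟩ := hg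
  exact ⟨k, v, (hgx.of_obj_eq hP hfib rfl).comp_map m⟩

theorem exists_factorsThrough_comp (hP : IsPresentedBy ι)
    (hfib : ∀ j, IsFiberedInGroupoids (ι j ⋙ F)) {A B : E} (q : A ⟶ B)
    {R : E} {g : R ⟶ A} (hg : ∃ j x, FactorsThrough (ι j) g x) :
    ∃ j x, FactorsThrough (ι j) (g ≫ q) x := by
  have hq : (legHoms ι).multiplicativeClosure q := hP.hom_gen ▸ trivial
  induction hq generalizing R with
  | of _ hq => exact exists_factorsThrough_comp_of_legHoms hP hfib hq hg
  | id => simpa using hg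
  | comp_of _ _ _ hq ih => simpa using exists_factorsThrough_comp_of_legHoms hP hfib hq (ih hg)

theorem FactorsThrough.of_isPresentedBy (hP : IsPresentedBy ι)
    (hfib : ∀ j, IsFiberedInGroupoids (ι j ⋙ F)) {R B : E} (g : R ⟶ B) {j : J} {y : P j}
    (hy : (ι j).obj y = B) : FactorsThrough (ι j) g y := by
  obtain ⟨i, x, rfl⟩ := hP.obj_surj R
  obtain ⟨k, z, hz⟩ := exists_factorsThrough_comp hP hfib g ⟨i, x, factorsThrough_id _ x⟩
  exact (Category.id_comp g ▸ hz).of_obj_eq hP hfib hy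

theorem IsPresentedBy.isPreFiberedInGroupoids (hP : IsPresentedBy ι)
    (hfib : ∀ j, IsFiberedInGroupoids (ι j ⋙ F)) : IsPreFiberedInGroupoids F where
  lift _ _ f X' hX := by
    obtain ⟨j, x, rfl⟩ := hP.obj_surj X'
    obtain ⟨y, f', hy, hf'⟩ := (hfib j).lift f x hX
    exact ⟨(ι j).obj y, (ι j).map f', hy, hf'⟩
  liftTriangle _ _ X' f' g' h hcomm := by
    obtain ⟨j, x, rfl⟩ := hP.obj_surj X'
    exact (FactorsThrough.of_isPresentedBy hP hfib f' rfl).exists_lift (hfib j)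
      (.of_isPresentedBy hP hfib g' rfl) h hcomm
  liftUniqueUpToAut _ Z' _ _ h₁ h₂ _ hF := by
    obtain ⟨j, z, rfl⟩ := hP.obj_surj Z'
    exact (FactorsThrough.of_isPresentedBy hP hfib h₁ rfl).exists_aut (hfib j)
      (.of_isPresentedBy hP hfib h₂ rfl) hF

end Legs

def wideSubcategoryLift {A E : Type*} [Category A] [Category E] {W : MorphismProperty E}
    [W.IsMultiplicative] (G : A ⥤ E) (hG : ∀ ⦃x y : A⦄ (m : x ⟶ y), W (G.map m)) :
    A ⥤ WideSubcategory W where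
  obj x := ⟨G.obj x⟩
  map m := ⟨G.map m, hG m⟩
  map_id x := by ext; simp
  map_comp f g := by ext; simp

section CatOverColimit

open Limits

variable {C : Type u} [Category.{u} C] {I : Type u} [Category.{u} I] {D : I ⥤ Over (Cat.of C)}

abbrev coconeLeg (c : Cocone D) (i : I) : (D.obj i).left ⥤ c.pt.left :=
  (c.ι.app i).left.toFunctor

theorem coconeLeg_comp_hom (c : Cocone D) (i : I) :
    coconeLeg c i ⋙ c.pt.hom.toFunctor = (D.obj i).hom.toFunctor :=
  congrArg Cat.Hom.toFunctor (Over.w (c.ι.app i))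

theorem map_comp_coconeLeg (c : Cocone D) {i j : I} (α : i ⟶ j) :
    (D.map α).left.toFunctor ⋙ coconeLeg c j = coconeLeg c i :=
  congrArg (fun f => f.left.toFunctor) (c.w α)

def coconeOfFunctors (X : Type u) [Category.{u} X] (G : X ⥤ C)
    (L : ∀ i, (D.obj i).left ⥤ X) (hG : ∀ i, L i ⋙ G = (D.obj i).hom.toFunctor)
    (hL : ∀ ⦃i j : I⦄ (α : i ⟶ j), (D.map α).left.toFunctor ⋙ L j = L i) :
    Cocone D where
  pt := Over.mk (X := Cat.of C) (Y := Cat.of X) G.toCatHom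
  ι :=
    { app i := Over.homMk (L i).toCatHom (Cat.Hom.ext (hG i))
      naturality i j α := by
        ext
        exact hL α }

theorem coconeLeg_comp_desc {c : Cocone D} (hc : IsColimit c) {X : Type u} [Category.{u} X]
    {G : X ⥤ C} {L : ∀ i, (D.obj i).left ⥤ X}
    (hG : ∀ i, L i ⋙ G = (D.obj i).hom.toFunctor)
    (hL : ∀ ⦃i j : I⦄ (α : i ⟶ j), (D.map α).left.toFunctor ⋙ L j = L i) (i : I) :
    coconeLeg c i ⋙ (hc.desc (coconeOfFunctors X G L hG hL)).left.toFunctor = L i :=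
  congrArg (fun f => f.left.toFunctor) (hc.fac (coconeOfFunctors X G L hG hL) i)

theorem exists_section_of_coconeLeg_factors {c : Cocone D} (hc : IsColimit c) {X : Type u}
    [Category.{u} X] (M : X ⥤ c.pt.left) (L : ∀ i, (D.obj i).left ⥤ X)
    (hM : ∀ i, L i ⋙ M = coconeLeg c i)
    (hL : ∀ ⦃i j : I⦄ (α : i ⟶ j), (D.map α).left.toFunctor ⋙ L j = L i) :
    ∃ S : c.pt.left ⥤ X, S ⋙ M = 𝟭 _ := by
  have hG i : L i ⋙ M ⋙ c.pt.hom.toFunctor = (D.obj i).hom.toFunctor := by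
    rw [← Functor.assoc, hM, coconeLeg_comp_hom]
  let s := coconeOfFunctors (C := C) X (M ⋙ c.pt.hom.toFunctor) L hG hL
  let m : s.pt ⟶ c.pt := Over.homMk M.toCatHom rfl
  have hid : hc.desc s ≫ m = 𝟙 c.pt := hc.hom_ext fun i => by
    rw [← Category.assoc, hc.fac s i, Category.comp_id]
    ext
    exact hM i
  exact ⟨_, congrArg (fun f => f.left.toFunctor) hid⟩

theorem coconeLeg_obj_surj {c : Cocone D} (hc : IsColimit c) (A : c.pt.left) :
    ∃ i x, (coconeLeg c i).obj x = A := by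
  let Q : ObjectProperty c.pt.left := fun A => ∃ i x, (coconeLeg c i).obj x = A
  obtain ⟨S, hS⟩ := exists_section_of_coconeLeg_factors hc Q.ι
    (fun i => Q.lift (coconeLeg c i) fun x => ⟨i, x, rfl⟩) (fun i => rfl) fun i j α => by
      change Q.lift ((D.map α).left.toFunctor ⋙ coconeLeg c j) _ = _
      congr 1
      exact map_comp_coconeLeg c α
  obtain ⟨i, x, hx⟩ := (S.obj A).property
  exact ⟨i, x, hx.trans (Functor.congr_obj hS A)⟩

theorem coconeLeg_hom_gen {c : Cocone D} (hc : IsColimit c) :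
    (legHoms (coconeLeg c)).multiplicativeClosure = ⊤ := by
  let W := (legHoms (coconeLeg c)).multiplicativeClosure
  have hW : ∀ i ⦃x y : (D.obj i).left⦄ (m : x ⟶ y), W ((coconeLeg c i).map m) :=
    fun i _ _ m => .of _ (map_mem_legHoms (coconeLeg c) i m)
  obtain ⟨S, hS⟩ := exists_section_of_coconeLeg_factors hc (wideSubcategoryInclusion W)
    (fun i => wideSubcategoryLift (coconeLeg c i) (hW i)) (fun i => rfl) fun i j α => by
      change wideSubcategoryLift ((D.map α).left.toFunctor ⋙ coconeLeg c j) _ = _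
      congr 1
      exact map_comp_coconeLeg c α
  refine eq_top_iff.2 fun A B u _ => ?_
  exact W.of_eq (S.map u).property (Functor.congr_obj hS A) (Functor.congr_obj hS B)
    (Functor.congr_hom hS.symm u)

theorem coconeLeg_eqvGen_linked {c : Cocone D} (hc : IsColimit c) {i j : I}
    (x : (D.obj i).left) (y : (D.obj j).left) (h : (coconeLeg c i).obj x = (coconeLeg c j).obj y) :
    Relation.EqvGen (Linked (coconeLeg c)) ⟨i, x⟩ ⟨j, y⟩ := by
  let Q := Quot (Linked (coconeLeg c))
  let L (k : I) : (D.obj k).left ⥤ C × Codiscrete Q :=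
    (D.obj k).hom.toFunctor.prod' (Codiscrete.functor fun z => 
      Quot.mk _ (⟨k, z⟩ : Σ n, (D.obj n).left))
  have hL ⦃k l : I⦄ (α : k ⟶ l) : (D.map α).left.toFunctor ⋙ L l = L k := by
    change ((D.map α).left.toFunctor ⋙ (D.obj l).hom.toFunctor).prod'
      (Codiscrete.functor fun z =>
        Quot.mk _ (⟨l, (D.map α).left.toFunctor.obj z⟩ : Σ n, (D.obj n).left)) = _
    rw [show (D.map α).left.toFunctor ⋙ (D.obj l).hom.toFunctor = (D.obj k).hom.toFunctor from
      congrArg Cat.Hom.toFunctor (Over.w (D.map α))]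
    congr 2
    funext z
    exact (Quot.sound ⟨(D.map α).left.toFunctor, rfl, map_comp_coconeLeg c α⟩).symm
  let s := coconeOfFunctors (C := C) (C × Codiscrete Q) (CategoryTheory.Prod.fst _ _) L
    (fun _ => rfl) hL
  have hquot (k : I) (z : (D.obj k).left) :
      ((hc.desc s).left.toFunctor.obj ((coconeLeg c k).obj z) : C × Codiscrete Q).2.as =
        Quot.mk _ ⟨k, z⟩ :=
    congrArg (·.2.as) (Functor.congr_obj (coconeLeg_comp_desc hc _ hL k) z)
  apply Quot.eqvGen_exact
  rw [← hquot i x, ← hquot j y, h]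

theorem isPresentedBy_coconeLeg {c : Cocone D} (hc : IsColimit c) :
    IsPresentedBy (coconeLeg c) where
  obj_surj := coconeLeg_obj_surj hc
  hom_gen := coconeLeg_hom_gen hc
  eqvGen_linked _ _ := coconeLeg_eqvGen_linked hc

end CatOverColimit

/-- The colimit, computed in `Cat/C`, of a diagram of categories fibered in groupoids
over a small category `C` is pre-fibered in groupoids. -/
theorem colimit_of_fibered_is_prefibered (C : Type u) [Category.{u} C]
    {I : Type u} [Category.{u} I] (D : I ⥤ Over (Cat.of C))
    (hD : ∀ i : I, IsFiberedInGroupoids ((D.obj i).hom.toFunctor : _ ⥤ _))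
    (c : Limits.Cocone D) (hc : Limits.IsColimit c) :
    IsPreFiberedInGroupoids (c.pt.hom.toFunctor : _ ⥤ _) :=
  (isPresentedBy_coconeLeg hc).isPreFiberedInGroupoids fun i => by
    rw [coconeLeg_comp_hom]
    exact hD i
end

section
/- Let A, B, C be small categories, let i : A → B be a functor that is injective on objects, and let j : A → C be a functor that is an equivalence of categories and surjective on objects. Then for any pushout square in the category Cat of small categories with legs i and j, the induced functor B → P (where P = C ⊔_A B is the pushout) is an equivalence of categories and is surjective on objects. -/
/-!
A fully faithful functor `j` that is surjective on objects has a strict section `K`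
(`K ⋙ j = 𝟭`) together with an isomorphism `𝟭 ≅ j ⋙ K`. Since `i` is injective on objects,
the isomorphism `i ≅ j ⋙ K ⋙ i` extends to an isomorphism `𝟭 B ≅ F` with `i ⋙ F = j ⋙ K ⋙ i`
on the nose, so `F` and `K ⋙ i` induce `q : P ⥤ B` with `pB ⋙ q = F ≅ 𝟭`. Isomorphisms between
functors out of a pushout can be glued from compatible isomorphisms on `B` and `C`; on `C` the
identity works because `pC ⋙ q ⋙ pB = pC`, which gives `q ⋙ pB ≅ 𝟭`. Finally every object of a
pushout in `Cat` comes from `B` or `C`, and those coming from `C = j(A)` come from `B`.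
-/

open CategoryTheory

universe u v w

namespace CategoryTheory

theorem Functor.ext_of_arrow_mk_map_eq {C D : Type*} [Category C] [Category D] {F G : C ⥤ D}
    (h : ∀ ⦃X Y : C⦄ (f : X ⟶ Y), Arrow.mk (F.map f) = Arrow.mk (G.map f)) : F = G :=
  Functor.ext (fun X => by simpa using congrArg Arrow.left (h (𝟙 X)))
    (fun _ _ f => by obtain ⟨_, _, hf⟩ := (Arrow.mk_eq_mk_iff _ _).1 (h f); exact hf)

theorem Arrow.mk_eqToHom {C : Type*} [Category C] {X Y : C} (h : X = Y) :
    Arrow.mk (eqToHom h) = Arrow.mk (𝟙 X) := by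
  subst h; rfl

section RightInverse

variable {A C : Type*} [Category A] [Category C] (j : A ⥤ C) [j.Full] [j.Faithful]
  (hj : Function.Surjective j.obj)

noncomputable def Functor.rightInverse : C ⥤ A where
  obj c := (hj c).choose
  map {c c'} φ := j.preimage (eqToHom (hj c).choose_spec ≫ φ ≫ eqToHom (hj c').choose_spec.symm)
  map_id c := j.map_injective (by simp)
  map_comp φ ψ := j.map_injective (by simp)

theorem Functor.rightInverse_comp : j.rightInverse hj ⋙ j = 𝟭 C :=
  Functor.ext (fun c => (hj c).choose_spec) (fun c c' φ => by simp [Functor.rightInverse])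

noncomputable def Functor.rightInverseUnitIso : 𝟭 A ≅ j ⋙ j.rightInverse hj :=
  Functor.fullyFaithfulCancelRight j
    (Functor.isoWhiskerLeft j (eqToIso (j.rightInverse_comp hj)).symm)

theorem Functor.map_rightInverseUnitIso_hom_app (a : A) :
    Arrow.mk (j.map ((j.rightInverseUnitIso hj).hom.app a)) = Arrow.mk (𝟙 (j.obj a)) := by
  simp [Functor.rightInverseUnitIso, Arrow.mk_eqToHom]

end RightInverse

open Classical in
theorem Functor.exists_iso_extension {A B D : Type*} [Category A] [Category B] [Category D]
    (i : A ⥤ B) (hi : Function.Injective i.obj) {E : B ⥤ D} {G : A ⥤ D} (e : i ⋙ E ≅ G) :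
    ∃ (F : B ⥤ D) (θ : E ≅ F), i ⋙ F = G ∧
      ∀ a, Arrow.mk (θ.hom.app (i.obj a)) = Arrow.mk (e.hom.app a) := by
  -- Each object is chosen together with its isomorphism, so that `ho` pins down both.
  let o (b : B) : Σ d, E.obj b ≅ d :=
    if h : ∃ a, i.obj a = b then
      ⟨G.obj h.choose, eqToIso (congrArg E.obj h.choose_spec.symm) ≪≫ e.app h.choose⟩
    else ⟨E.obj b, Iso.refl _⟩
  have ho (a : A) : o (i.obj a) = ⟨G.obj a, e.app a⟩ := by
    have h : ∃ a', i.obj a' = i.obj a := ⟨a, rfl⟩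
    have key (a' : A) (ha' : i.obj a' = i.obj a) :
        (⟨G.obj a', eqToIso (congrArg E.obj ha'.symm) ≪≫ e.app a'⟩ : Σ d, E.obj (i.obj a) ≅ d) =
          ⟨G.obj a, e.app a⟩ := by
      obtain rfl := hi ha'
      simp
    simpa only [o, dif_pos h] using key _ h.choose_spec
  refine ⟨E.copyObj (fun b => (o b).1) (fun b => (o b).2), E.isoCopyObj _ _,
    Functor.ext_of_arrow_mk_map_eq fun a a' f => ?_, fun a => ?_⟩
  · refine (congrArg₂ (fun (s : Σ d, E.obj (i.obj a) ≅ d) (t : Σ d, E.obj (i.obj a') ≅ d) =>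
      Arrow.mk (s.2.inv ≫ E.map (i.map f) ≫ t.2.hom)) (ho a) (ho a')).trans ?_
    exact congrArg Arrow.mk ((Iso.inv_comp_eq (e.app a)).2 (e.hom.naturality f))
  · exact congrArg (fun s : Σ d, E.obj (i.obj a) ≅ d => Arrow.mk s.2.hom) (ho a)

def NatTrans.toArrowFunctor {X D : Type*} [Category X] [Category D] {F G : X ⥤ D} (τ : F ⟶ G) :
    X ⥤ Arrow D where
  obj x := Arrow.mk (τ.app x)
  map f := Arrow.homMk (F.map f) (G.map f) (τ.naturality f)

theorem NatTrans.toArrowFunctor_congr {X D : Type*} [Category X] [Category D]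
    {F G F' G' : X ⥤ D} (τ : F ⟶ G) (τ' : F' ⟶ G') (hF : F = F') (hG : G = G')
    (h : ∀ x, Arrow.mk (τ.app x) = Arrow.mk (τ'.app x)) :
    τ.toArrowFunctor = τ'.toArrowFunctor := by
  subst hF hG
  obtain rfl : τ = τ' := NatTrans.ext (funext fun x => (Arrow.mk_inj _ _).1 (h x))
  rfl

namespace IsPushout

section

variable {A B C P : Cat.{v, w}} {i : A ⟶ B} {j : A ⟶ C} {pB : B ⟶ P} {pC : C ⟶ P}

theorem cat_obj_mem_range (hpo : IsPushout i j pB pC) (X : P) :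
    X ∈ Set.range pB.toFunctor.obj ∨ X ∈ Set.range pC.toFunctor.obj := by
  -- `P` retracts onto the full subcategory `S` of objects coming from `B` or `C`.
  let S : ObjectProperty P := fun X =>
    X ∈ Set.range pB.toFunctor.obj ∨ X ∈ Set.range pC.toFunctor.obj
  have lift_congr {Y : Type w} [Category.{v} Y] {F G : Y ⥤ P} (h : F = G) (hF : ∀ y, S (F.obj y))
      (hG : ∀ y, S (G.obj y)) : S.lift F hF = S.lift G hG := by
    subst h; rfl
  let liftB : B ⟶ Cat.of S.FullSubcategory := (S.lift pB.toFunctor fun b => .inl ⟨b, rfl⟩).toCatHom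
  let liftC : C ⟶ Cat.of S.FullSubcategory := (S.lift pC.toFunctor fun c => .inr ⟨c, rfl⟩).toCatHom
  let r := hpo.desc liftB liftC (Cat.Hom.ext (lift_congr (congrArg Cat.Hom.toFunctor hpo.w) _ _))
  let ι : Cat.of S.FullSubcategory ⟶ P := S.ι.toCatHom
  have hr : r ≫ ι = 𝟙 P := hpo.hom_ext
    (by rw [← Category.assoc, hpo.inl_desc]; rfl) (by rw [← Category.assoc, hpo.inr_desc]; rfl)
  have hrX : (r.toFunctor.obj X).obj = X := Functor.congr_obj (congrArg Cat.Hom.toFunctor hr) X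
  exact hrX ▸ (r.toFunctor.obj X).property

theorem cat_surjective_inl_obj (hpo : IsPushout i j pB pC)
    (hj : Function.Surjective j.toFunctor.obj) : Function.Surjective pB.toFunctor.obj := by
  intro X
  rcases hpo.cat_obj_mem_range X with h | ⟨c, rfl⟩
  · exact h
  · obtain ⟨a, rfl⟩ := hj c
    exact ⟨i.toFunctor.obj a, Functor.congr_obj (congrArg Cat.Hom.toFunctor hpo.w) a⟩

theorem cat_exists_weakLeftInverse_inl (hpo : IsPushout i j pB pC)
    (hi : Function.Injective i.toFunctor.obj) [j.toFunctor.Full] [j.toFunctor.Faithful]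
    (hj : Function.Surjective j.toFunctor.obj) :
    ∃ (q : P ⥤ B) (θ : 𝟭 B ≅ pB.toFunctor ⋙ q), pC.toFunctor ⋙ q ⋙ pB.toFunctor = pC.toFunctor ∧
      ∀ a, Arrow.mk (pB.toFunctor.map (θ.hom.app (i.toFunctor.obj a))) =
        Arrow.mk (𝟙 (pC.toFunctor.obj (j.toFunctor.obj a))) := by
  have hw : i.toFunctor ⋙ pB.toFunctor = j.toFunctor ⋙ pC.toFunctor :=
    congrArg Cat.Hom.toFunctor hpo.w
  let K := j.toFunctor.rightInverse hj
  let η := j.toFunctor.rightInverseUnitIso hj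
  obtain ⟨F, θ, hF, hθ⟩ :=
    Functor.exists_iso_extension (E := 𝟭 B) i.toFunctor hi (Functor.isoWhiskerRight η i.toFunctor)
  let q : P ⟶ B := hpo.desc (F.toCatHom : B ⟶ B) ((K ⋙ i.toFunctor).toCatHom : C ⟶ B)
    (Cat.Hom.ext hF)
  have hpBq : pB.toFunctor ⋙ q.toFunctor = F := congrArg Cat.Hom.toFunctor (hpo.inl_desc _ _ _)
  have hpCq : pC.toFunctor ⋙ q.toFunctor = K ⋙ i.toFunctor :=
    congrArg Cat.Hom.toFunctor (hpo.inr_desc _ _ _)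
  refine ⟨q.toFunctor, θ ≪≫ eqToIso hpBq.symm, ?_, fun a => ?_⟩
  · rw [← Functor.assoc, hpCq, Functor.assoc, hw, ← Functor.assoc, j.toFunctor.rightInverse_comp]
    rfl
  · calc _
      _ = pB.toFunctor.mapArrow.obj (Arrow.mk (θ.hom.app (i.toFunctor.obj a))) := by
        simp [eqToHom_map]
      _ = (i.toFunctor ⋙ pB.toFunctor).mapArrow.obj (Arrow.mk (η.hom.app a)) :=
        congrArg pB.toFunctor.mapArrow.obj (hθ a)
      _ = pC.toFunctor.mapArrow.obj (Arrow.mk (j.toFunctor.map (η.hom.app a))) := by rw [hw]; rfl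
      _ = pC.toFunctor.mapArrow.obj (Arrow.mk (𝟙 (j.toFunctor.obj a))) :=
        congrArg pC.toFunctor.mapArrow.obj (j.toFunctor.map_rightInverseUnitIso_hom_app hj a)
      _ = _ := by simp

end

theorem cat_nonempty_iso {A B C P : Cat.{u, u}} {i : A ⟶ B} {j : A ⟶ C} {pB : B ⟶ P}
    {pC : C ⟶ P} (hpo : IsPushout i j pB pC) {D : Type u} [Category.{u} D] {F G : P ⥤ D}
    (τB : pB.toFunctor ⋙ F ≅ pB.toFunctor ⋙ G) (τC : pC.toFunctor ⋙ F ≅ pC.toFunctor ⋙ G)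
    (h : ∀ a, Arrow.mk (τB.hom.app (i.toFunctor.obj a)) =
      Arrow.mk (τC.hom.app (j.toFunctor.obj a))) :
    Nonempty (F ≅ G) := by
  have hw : i.toFunctor ⋙ pB.toFunctor = j.toFunctor ⋙ pC.toFunctor :=
    congrArg Cat.Hom.toFunctor hpo.w
  -- A natural transformation is a functor into the arrow category, and those glue along `hpo`.
  let HB : B ⟶ Cat.of (Arrow D) := τB.hom.toArrowFunctor.toCatHom
  let HC : C ⟶ Cat.of (Arrow D) := τC.hom.toArrowFunctor.toCatHom
  let H := hpo.desc HB HC <| Cat.Hom.ext <|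
    NatTrans.toArrowFunctor_congr (Functor.whiskerLeft i.toFunctor τB.hom)
      (Functor.whiskerLeft j.toFunctor τC.hom) (congrArg (· ⋙ F) hw) (congrArg (· ⋙ G) hw) h
  let H' : P ⥤ Arrow D := H.toFunctor
  have hL : H' ⋙ Arrow.leftFunc = F := by
    have : H ≫ (Arrow.leftFunc.toCatHom : Cat.of (Arrow D) ⟶ Cat.of D) = F.toCatHom :=
      hpo.hom_ext (by rw [← Category.assoc, hpo.inl_desc]; rfl)
        (by rw [← Category.assoc, hpo.inr_desc]; rfl)
    exact congrArg Cat.Hom.toFunctor this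
  have hR : H' ⋙ Arrow.rightFunc = G := by
    have : H ≫ (Arrow.rightFunc.toCatHom : Cat.of (Arrow D) ⟶ Cat.of D) = G.toCatHom :=
      hpo.hom_ext (by rw [← Category.assoc, hpo.inl_desc]; rfl)
        (by rw [← Category.assoc, hpo.inr_desc]; rfl)
    exact congrArg Cat.Hom.toFunctor this
  have isIso_of_eq {x y : Arrow D} (hxy : x = y) (_ : IsIso y.hom) : IsIso x.hom := hxy ▸ ‹_›
  have hH (X : P) : IsIso (H'.obj X).hom := by
    rcases hpo.cat_obj_mem_range X with ⟨b, rfl⟩ | ⟨c, rfl⟩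
    · exact isIso_of_eq (Functor.congr_obj (congrArg Cat.Hom.toFunctor (hpo.inl_desc HB HC _)) b)
        (inferInstanceAs (IsIso (τB.hom.app b)))
    · exact isIso_of_eq (Functor.congr_obj (congrArg Cat.Hom.toFunctor (hpo.inr_desc HB HC _)) c)
        (inferInstanceAs (IsIso (τC.hom.app c)))
  have : IsIso (Functor.whiskerLeft H' Arrow.leftToRight) := (NatTrans.isIso_iff_isIso_app _).2 hH
  exact ⟨eqToIso hL.symm ≪≫ asIso (Functor.whiskerLeft H' Arrow.leftToRight) ≪≫ eqToIso hR⟩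

end IsPushout

end CategoryTheory

/-- Pushouts in `Cat` along a functor which is injective on objects of a functor which
is an equivalence surjective on objects: the induced functor `B ⟶ P` to any pushout of
the span `B ⟵ A ⟶ C` is again an equivalence of categories surjective on objects. -/
theorem pushout_of_surjective_equivalence
    {A B C P : Cat.{u, u}} (i : A ⟶ B) (j : A ⟶ C)
    (hi : Function.Injective (i.toFunctor : A ⥤ B).obj)
    (hj₁ : Functor.IsEquivalence (j.toFunctor : A ⥤ C))
    (hj₂ : Function.Surjective (j.toFunctor : A ⥤ C).obj)
    (pB : B ⟶ P) (pC : C ⟶ P)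
    (hpo : IsPushout i j pB pC) :
    Functor.IsEquivalence (pB.toFunctor : B ⥤ P) ∧ Function.Surjective (pB.toFunctor : B ⥤ P).obj := by
  have := hj₁.full
  have := hj₁.faithful
  obtain ⟨q, θ, hq, hθ⟩ := hpo.cat_exists_weakLeftInverse_inl hi hj₂
  let τB : pB.toFunctor ⋙ 𝟭 P ≅ pB.toFunctor ⋙ q ⋙ pB.toFunctor :=
    Functor.isoWhiskerRight θ pB.toFunctor
  obtain ⟨ε⟩ := hpo.cat_nonempty_iso τB (eqToIso hq.symm) fun a => by
    simp [τB, hθ a, Arrow.mk_eqToHom]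
  exact ⟨(CategoryTheory.Equivalence.mk pB.toFunctor q θ ε.symm).isEquivalence_functor,
    hpo.cat_surjective_inl_obj hj₂⟩
end
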